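/- arXiv:2005.12997 — 2 statements merged into one kernel-verified Lean document; each statement's English description precedes it below -/
import Mathlib

section
/- There exists an integer D such that for all integers k ≥ D and all real w with 0 < w ≤ 1/k the following holds: if z₀ is a complex number with Σ_{ℓ=0}^∞ (-w)^ℓ z₀^{ℓk+1}/((ℓk+1)·ℓ!) = 1 and |z₀| ≤ 1 + (ln k + ln ln ln k)/k, then z₀ = ρ̃, where ρ̃ is the unique real number in (1, 1 + 2w/k) with ∫_0^{ρ̃} exp(-w v^k) dv = 1. In other words, every complex zero of G_{k,w}(z) - 1 other than ρ̃ has modulus greater than 1 + (ln k + ln ln ln k)/k. -/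
/-!
Write `G(z) = z + ∑_{ℓ ≥ 1} c^ℓ z^{ℓk+1} / ((ℓk+1) ℓ!)` with `|c| ≤ 1/k`. On `|z| ≤ R` the tail is
at most `(R/k)(exp(|c| R^k) - 1)`; for `R = 1 + (log k + log log log k)/k` one has
`|c| R^k ≤ log log k`, so a solution of `G(z) = 1` satisfies `|z - 1| ≤ R (log k - 1)/k` and lies in
the smaller disc `|z| ≤ r = 1 + (log k - 1/2)/k`, which also contains `ρ̃`. There
`|c| r^k ≤ e^{-1/2} < log 2`, and since `|z^n - ζ^n| ≤ n r^{n-1} |z - ζ|` termwise,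
`|G(z) - G(ζ) - (z - ζ)| ≤ (exp(|c| r^k) - 1) |z - ζ| < |z - ζ|`: `G` is injective on that disc.
-/

open Filter Real
open scoped Nat

noncomputable def expPowIntegralTerm (c : ℂ) (k : ℕ) (z : ℂ) (ℓ : ℕ) : ℂ :=
  c ^ ℓ * z ^ (ℓ * k + 1) / (((ℓ * k + 1 : ℕ) : ℂ) * (ℓ ! : ℂ))

/-- The entire continuation of `z ↦ ∫₀^z exp (c v ^ k) dv`; the paper's `G_{k,w}` is
`expPowIntegral (-w) k`. -/
noncomputable def expPowIntegral (c : ℂ) (k : ℕ) (z : ℂ) : ℂ :=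
  ∑' ℓ, expPowIntegralTerm c k z ℓ

lemma Real.hasSum_pow_div_factorial (y : ℝ) : HasSum (fun n : ℕ => y ^ n / n !) (exp y) :=
  exp_eq_exp_ℝ ▸ NormedSpace.expSeries_div_hasSum_exp y

lemma norm_tsum_sub_zero_le {E : Type*} [NormedAddCommGroup E] {u : ℕ → E} {C y : ℝ}
    (hu : Summable u) (h : ∀ ℓ, ‖u (ℓ + 1)‖ ≤ C * (y ^ (ℓ + 1) / (ℓ + 1)!)) :
    ‖∑' ℓ, u ℓ - u 0‖ ≤ C * (exp y - 1) := by
  have htail : HasSum (fun ℓ : ℕ => y ^ (ℓ + 1) / (ℓ + 1)!) (exp y - 1) := by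
    simpa using (hasSum_nat_add_iff' 1).2 (hasSum_pow_div_factorial y)
  rw [hu.tsum_eq_zero_add, add_sub_cancel_left]
  exact tsum_of_norm_bounded (htail.mul_left C) h

lemma norm_pow_sub_pow_le {𝕜 : Type*} [NormedField 𝕜] {a b : 𝕜} {r : ℝ} (ha : ‖a‖ ≤ r)
    (hb : ‖b‖ ≤ r) (n : ℕ) : ‖a ^ n - b ^ n‖ ≤ n * r ^ (n - 1) * ‖a - b‖ := by
  rw [← geom_sum₂_mul, norm_mul]
  gcongr
  have hr : 0 ≤ r := (norm_nonneg a).trans ha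
  calc ‖∑ j ∈ Finset.range n, a ^ j * b ^ (n - 1 - j)‖
      ≤ ∑ j ∈ Finset.range n, ‖a ^ j * b ^ (n - 1 - j)‖ := norm_sum_le _ _
    _ ≤ ∑ j ∈ Finset.range n, r ^ (n - 1) := by
        refine Finset.sum_le_sum fun j hj => ?_
        have hj : j ≤ n - 1 := by have := Finset.mem_range.1 hj; omega
        rw [norm_mul, norm_pow, norm_pow, ← Nat.add_sub_cancel' hj, pow_add,
          Nat.add_sub_cancel_left]
        exact mul_le_mul (pow_le_pow_left₀ (norm_nonneg a) ha j)
          (pow_le_pow_left₀ (norm_nonneg b) hb _) (by positivity) (pow_nonneg hr j)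
    _ = n * r ^ (n - 1) := by simp

section ExpPowIntegral

variable {c : ℂ} {k : ℕ}

lemma norm_expPowIntegralTerm_le {r : ℝ} {z : ℂ} (hz : ‖z‖ ≤ r) (ℓ : ℕ) :
    ‖expPowIntegralTerm c k z ℓ‖ ≤ r / (ℓ * k + 1 : ℕ) * ((‖c‖ * r ^ k) ^ ℓ / ℓ !) := by
  simp only [expPowIntegralTerm, norm_div, norm_mul, norm_pow, Complex.norm_natCast]
  calc ‖c‖ ^ ℓ * ‖z‖ ^ (ℓ * k + 1) / ((ℓ * k + 1 : ℕ) * ℓ !)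
      ≤ ‖c‖ ^ ℓ * r ^ (ℓ * k + 1) / ((ℓ * k + 1 : ℕ) * ℓ !) := by gcongr
    _ = r / (ℓ * k + 1 : ℕ) * ((‖c‖ * r ^ k) ^ ℓ / ℓ !) := by
      rw [pow_succ, pow_mul']; field_simp; ring

lemma summable_expPowIntegralTerm (c : ℂ) (k : ℕ) (z : ℂ) :
    Summable (expPowIntegralTerm c k z) := by
  refine .of_norm_bounded ((summable_pow_div_factorial (‖c‖ * ‖z‖ ^ k)).mul_left ‖z‖) fun ℓ =>
    (norm_expPowIntegralTerm_le le_rfl ℓ).trans ?_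
  gcongr
  exact div_le_self (norm_nonneg z) (by exact_mod_cast Nat.succ_pos _)

lemma norm_expPowIntegralTerm_sub_le {r : ℝ} {z ζ : ℂ} (hz : ‖z‖ ≤ r) (hζ : ‖ζ‖ ≤ r) (ℓ : ℕ) :
    ‖expPowIntegralTerm c k z ℓ - expPowIntegralTerm c k ζ ℓ‖
      ≤ ‖z - ζ‖ * ((‖c‖ * r ^ k) ^ ℓ / ℓ !) := by
  have hsub : expPowIntegralTerm c k z ℓ - expPowIntegralTerm c k ζ ℓ
      = c ^ ℓ * (z ^ (ℓ * k + 1) - ζ ^ (ℓ * k + 1)) / (((ℓ * k + 1 : ℕ) : ℂ) * (ℓ ! : ℂ)) := by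
    simp only [expPowIntegralTerm]; ring
  rw [hsub, norm_div, norm_mul, norm_mul, norm_pow, Complex.norm_natCast, Complex.norm_natCast]
  calc ‖c‖ ^ ℓ * ‖z ^ (ℓ * k + 1) - ζ ^ (ℓ * k + 1)‖ / ((ℓ * k + 1 : ℕ) * ℓ !)
      ≤ ‖c‖ ^ ℓ * ((ℓ * k + 1 : ℕ) * r ^ (ℓ * k) * ‖z - ζ‖) / ((ℓ * k + 1 : ℕ) * ℓ !) := by
        gcongr; exact norm_pow_sub_pow_le hz hζ _
    _ = ‖z - ζ‖ * ((‖c‖ * r ^ k) ^ ℓ / ℓ !) := by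
        rw [mul_pow, pow_mul']; field_simp

lemma norm_expPowIntegral_sub_self_le (hk : 0 < k) {r : ℝ} {z : ℂ} (hz : ‖z‖ ≤ r) :
    ‖expPowIntegral c k z - z‖ ≤ r / k * (exp (‖c‖ * r ^ k) - 1) := by
  have hr : 0 ≤ r := (norm_nonneg z).trans hz
  have hzero : expPowIntegralTerm c k z 0 = z := by simp [expPowIntegralTerm]
  have := norm_tsum_sub_zero_le (C := r / k) (y := ‖c‖ * r ^ k)
    (summable_expPowIntegralTerm c k z) fun ℓ => ?_
  · rwa [hzero] at this
  refine (norm_expPowIntegralTerm_le hz _).trans ?_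
  gcongr
  nlinarith

lemma norm_expPowIntegral_sub_sub_le {r : ℝ} {z ζ : ℂ} (hz : ‖z‖ ≤ r) (hζ : ‖ζ‖ ≤ r) :
    ‖(expPowIntegral c k z - expPowIntegral c k ζ) - (z - ζ)‖
      ≤ ‖z - ζ‖ * (exp (‖c‖ * r ^ k) - 1) := by
  have hsum := (summable_expPowIntegralTerm c k z).sub (summable_expPowIntegralTerm c k ζ)
  have hzero : expPowIntegralTerm c k z 0 - expPowIntegralTerm c k ζ 0 = z - ζ := by
    simp [expPowIntegralTerm]
  have := norm_tsum_sub_zero_le (C := ‖z - ζ‖) (y := ‖c‖ * r ^ k) hsum fun ℓ =>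
    norm_expPowIntegralTerm_sub_le hz hζ (ℓ + 1)
  rwa [hzero, Summable.tsum_sub (summable_expPowIntegralTerm c k z)
    (summable_expPowIntegralTerm c k ζ)] at this

lemma expPowIntegral_injOn {r : ℝ} (h : exp (‖c‖ * r ^ k) < 2) :
    Set.InjOn (expPowIntegral c k) (Metric.closedBall 0 r) := by
  intro z hz ζ hζ heq
  rw [mem_closedBall_zero_iff] at hz hζ
  have := norm_expPowIntegral_sub_sub_le (c := c) (k := k) hz hζ
  rw [heq, sub_self, zero_sub, norm_neg] at this
  by_contra hne
  have hpos : 0 < ‖z - ζ‖ := norm_pos_iff.2 (sub_ne_zero.2 hne)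
  nlinarith

end ExpPowIntegral

lemma hasSum_integral_exp_mul_pow (c ρ : ℝ) (k : ℕ) :
    HasSum (fun ℓ : ℕ => c ^ ℓ * ρ ^ (ℓ * k + 1) / ((ℓ * k + 1 : ℕ) * ℓ !))
      (∫ v in (0 : ℝ)..ρ, exp (c * v ^ k)) := by
  have hterm (ℓ : ℕ) : ∫ v in (0 : ℝ)..ρ, (c * v ^ k) ^ ℓ / ℓ !
      = c ^ ℓ * ρ ^ (ℓ * k + 1) / ((ℓ * k + 1 : ℕ) * ℓ !) := by
    simp only [mul_pow, ← pow_mul]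
    rw [intervalIntegral.integral_div, intervalIntegral.integral_const_mul, integral_pow,
      zero_pow (Nat.succ_ne_zero _), mul_comm k ℓ]
    push_cast
    field_simp
    rw [sub_zero]
  simp only [← hterm]
  refine intervalIntegral.hasSum_integral_of_dominated_convergence
    (fun ℓ _ => (|c| * |ρ| ^ k) ^ ℓ / ℓ !) (fun ℓ => by fun_prop) (fun ℓ => ?_)
    (MeasureTheory.ae_of_all _ fun _ _ => summable_pow_div_factorial _) intervalIntegrable_const
    (MeasureTheory.ae_of_all _ fun v _ => hasSum_pow_div_factorial (c * v ^ k))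
  refine MeasureTheory.ae_of_all _ fun v hv => ?_
  have hvρ : |v| ≤ |ρ| := by
    have := neg_abs_le ρ
    have := le_abs_self ρ
    rcases Set.mem_uIoc.1 hv with h | h <;> exact abs_le.2 ⟨by linarith, by linarith⟩
  rw [norm_div, norm_pow, Real.norm_natCast, norm_mul, norm_pow, Real.norm_eq_abs, Real.norm_eq_abs]
  gcongr

lemma expPowIntegral_ofReal (c ρ : ℝ) (k : ℕ) :
    expPowIntegral c k ρ = ∫ v in (0 : ℝ)..ρ, exp (c * v ^ k) := by
  rw [← (hasSum_integral_exp_mul_pow c ρ k).tsum_eq, Complex.ofReal_tsum, expPowIntegral]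
  refine tsum_congr fun ℓ => ?_
  simp only [expPowIntegralTerm]
  push_cast
  rfl

lemma pow_le_exp_of_le_one_add_div {R t : ℝ} {k : ℕ} (hk : 0 < k) (hR : 0 ≤ R)
    (h : R ≤ 1 + t / k) : R ^ k ≤ exp t := by
  calc R ^ k ≤ exp (t / k) ^ k := by gcongr; linarith [add_one_le_exp (t / k)]
    _ = exp t := by rw [← exp_nat_mul]; field_simp

section LargeDegree

variable {c : ℂ} {k : ℕ}

lemma norm_le_of_expPowIntegral_eq_one (hk : 0 < k) (hlog : 5 / 2 ≤ log k)
    (hlog_sq : log k ^ 2 ≤ k / 4) (hc : ‖c‖ ≤ 1 / k) {z : ℂ} (hz : expPowIntegral c k z = 1)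
    (hzR : ‖z‖ ≤ 1 + (log k + log (log (log k))) / k) : ‖z‖ ≤ 1 + (log k - 1 / 2) / k := by
  set A := log k
  set R := 1 + (A + log (log A)) / k
  have hK : (0 : ℝ) < k := by exact_mod_cast hk
  have hR : 0 ≤ R := (norm_nonneg z).trans hzR
  have hlogA : 0 < log A := log_pos (by linarith)
  have hloglogA : log (log A) ≤ A := by
    linarith [log_le_sub_one_of_pos hlogA, log_le_sub_one_of_pos (by linarith : 0 < A)]
  have hexp : exp (‖c‖ * R ^ k) ≤ A := by
    have hRk : R ^ k ≤ k * log A := by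
      calc R ^ k ≤ exp (A + log (log A)) :=
            pow_le_exp_of_le_one_add_div hk hR le_rfl
        _ = k * log A := by rw [exp_add, exp_log hK, exp_log hlogA]
    calc exp (‖c‖ * R ^ k) ≤ exp (1 / k * (k * log A)) := by gcongr
      _ = A := by rw [show 1 / (k : ℝ) * (k * log A) = log A by field_simp, exp_log (by linarith)]
  have hz1 : ‖z - 1‖ ≤ R / k * (A - 1) := by
    have h := norm_expPowIntegral_sub_self_le (c := c) hk hzR
    rw [hz, norm_sub_rev] at h
    have : 0 ≤ R / k := div_nonneg hR hK.le
    exact h.trans (by gcongr)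
  have hRA : R * (A - 1) ≤ A - 1 / 2 := by
    have : (A + log (log A)) * (A - 1) / k ≤ 1 / 2 := by
      rw [div_le_iff₀ hK]
      nlinarith [mul_le_mul_of_nonneg_right hloglogA (by linarith : (0 : ℝ) ≤ A - 1)]
    calc R * (A - 1) = (A - 1) + (A + log (log A)) * (A - 1) / k := by ring
      _ ≤ A - 1 / 2 := by linarith
  calc ‖z‖ ≤ ‖(1 : ℂ)‖ + ‖z - 1‖ := norm_le_norm_add_norm_sub' z 1
    _ ≤ 1 + R / k * (A - 1) := by rw [norm_one]; gcongr
    _ ≤ 1 + (A - 1 / 2) / k := by rw [div_mul_eq_mul_div]; gcongr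

lemma exp_norm_mul_pow_lt_two (hk : 0 < k) (hc : ‖c‖ ≤ 1 / k) :
    exp (‖c‖ * (1 + (log k - 1 / 2) / k) ^ k) < 2 := by
  have hK : (1 : ℝ) ≤ k := by exact_mod_cast hk
  have hr : 0 ≤ 1 + (log k - 1 / 2) / k := by
    rw [one_add_div (by positivity)]
    exact div_nonneg (by linarith [log_nonneg hK]) (by positivity)
  have hhalf : exp (-(1 / 2)) ≤ 2 / 3 := by
    rw [exp_neg, inv_le_comm₀ (exp_pos _) (by norm_num)]
    linarith [add_one_le_exp (1 / 2 : ℝ)]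
  have hbound : ‖c‖ * (1 + (log k - 1 / 2) / k) ^ k ≤ 2 / 3 := by
    calc ‖c‖ * (1 + (log k - 1 / 2) / k) ^ k ≤ 1 / k * exp (log k + -(1 / 2)) := by
          gcongr; exact pow_le_exp_of_le_one_add_div hk hr (by rw [← sub_eq_add_neg])
      _ = exp (-(1 / 2)) := by rw [exp_add, exp_log (by linarith)]; field_simp
      _ ≤ 2 / 3 := hhalf
  calc exp (‖c‖ * (1 + (log k - 1 / 2) / k) ^ k) ≤ exp (2 / 3) := exp_le_exp.2 hbound
    _ < exp (log 2) := exp_lt_exp.2 (by linarith [log_two_gt_d9])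
    _ = 2 := exp_log two_pos

lemma eventually_log_bounds :
    ∀ᶠ k : ℕ in atTop, 0 < k ∧ 5 / 2 ≤ log k ∧ log k ^ 2 ≤ k / 4 := by
  have hcast := tendsto_natCast_atTop_atTop (R := ℝ)
  filter_upwards [eventually_gt_atTop 0,
    hcast.eventually (tendsto_log_atTop.eventually_ge_atTop (5 / 2)),
    hcast.eventually ((isLittleO_pow_log_id_atTop (n := 2)).bound (by norm_num : (0 : ℝ) < 1 / 4))]
    with k hk hlog hsq
  refine ⟨hk, hlog, ?_⟩
  simpa [div_eq_inv_mul, sq_abs] using hsq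

end LargeDegree

/-- There is `D` such that for all `k ≥ D` and `0 < w ≤ 1/k`: if `ρ̃` is the unique
real in `(1, 1 + 2w/k)` with `∫_0^{ρ̃} exp(-w v^k) dv = 1`, then every complex solution `z₀` of
`Σ_{ℓ≥0} (-w)^ℓ z₀^(ℓk+1)/((ℓk+1)·ℓ!) = 1` with `|z₀| ≤ 1 + (ln k + ln ln ln k)/k` equals `ρ̃`. -/
theorem stmt5 : ∃ D : ℕ, ∀ k : ℕ, D ≤ k → ∀ w : ℝ, 0 < w → w ≤ 1 / k →
    ∀ ρ : ℝ, 1 < ρ → ρ < 1 + 2 * w / k →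
      (∫ v in (0:ℝ)..ρ, Real.exp (-w * v ^ k)) = 1 →
    ∀ z₀ : ℂ,
      (∑' ℓ : ℕ, ((-w : ℂ)) ^ ℓ * z₀ ^ (ℓ * k + 1) /
        (((ℓ * k + 1 : ℕ) : ℂ) * (Nat.factorial ℓ : ℂ))) = 1 →
      ‖z₀‖ ≤ 1 + (Real.log k + Real.log (Real.log (Real.log k))) / k →
      z₀ = (ρ : ℂ) := by
  obtain ⟨D, hD⟩ := eventually_atTop.1 eventually_log_bounds
  refine ⟨D, fun k hk w hw hwk ρ hρ1 hρ2 hint z₀ hz₀ hz₀R => ?_⟩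
  obtain ⟨hk0, hlog, hlog_sq⟩ := hD k hk
  have hc : ‖(-w : ℂ)‖ ≤ 1 / k := by simpa [abs_of_pos hw] using hwk
  have hρ : expPowIntegral (-w) k ρ = 1 := by
    rw [← Complex.ofReal_neg, expPowIntegral_ofReal, hint, Complex.ofReal_one]
  have hρr : ‖(ρ : ℂ)‖ ≤ 1 + (log k - 1 / 2) / k := by
    have hw1 : w ≤ 1 := hwk.trans (div_le_one_of_le₀ (by exact_mod_cast hk0) (Nat.cast_nonneg k))
    rw [Complex.norm_real, norm_of_nonneg (by linarith)]
    calc ρ ≤ 1 + 2 * w / k := hρ2.le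
      _ ≤ 1 + (log k - 1 / 2) / k := by gcongr; linarith
  refine expPowIntegral_injOn (exp_norm_mul_pow_lt_two hk0 hc) ?_ ?_ (hz₀.trans hρ.symm)
  · exact mem_closedBall_zero_iff.2 (norm_le_of_expPowIntegral_eq_one hk0 hlog hlog_sq hc hz₀ hz₀R)
  · exact mem_closedBall_zero_iff.2 hρr
end

section
/- There exists an integer K such that for all integers k ≥ K and all real w with 0 < w ≤ 1/2^{k-2}, the function u_{k,w} satisfies u_{k,w}(1 + 1/k²) > 0 (while u_{k,w}(0) = −1 < 0); in particular u_{k,w} has a zero in the interval (0, 1 + 1/k²). -/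
open scoped BigOperators

/-- The falling factorial `(x)_m = x (x-1) ⋯ (x-m+1)` of a real number. -/
noncomputable def fallFact (x : ℝ) (m : ℕ) : ℝ := ∏ j ∈ Finset.range m, (x - j)

/-- The function `u_{k,w}`, the solution of `u'' - 2u' + (1 - w k z^(k-1)) u = 0` with
`u(0) = -1`, `u'(0) = 0`, given by its Bessel-type series. -/
noncomputable def ukw (k : ℕ) (w : ℝ) (z : ℝ) : ℝ :=
  z * Real.exp z * ∑' m : ℕ, (w * k / ((k : ℝ) + 1) ^ 2) ^ m * z ^ ((k + 1) * m) /
      ((Nat.factorial m : ℝ) * fallFact ((m : ℝ) + 1 / ((k : ℝ) + 1)) m)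
    - Real.exp z * ∑' m : ℕ, (w * k / ((k : ℝ) + 1) ^ 2) ^ m * z ^ ((k + 1) * m) /
      ((Nat.factorial m : ℝ) * fallFact ((m : ℝ) - 1 / ((k : ℝ) + 1)) m)

/-!
With `b = w k / (k+1)²` and `c = b z^(k+1)`, both series in `u_{k,w}(z)` have `m`-th term
between `0` and `(2c)^m`, because `(m ± α)_m ≥ 2^(-m)`; their constant term is `1`. Hence
`u_{k,w}(z) ≥ z e^z - e^z / (1 - 2c)`, which is positive as soon as `(1 - 2c)⁻¹ < z`.
At `z = 1 + 1/k²` we have `z^(k+1) ≤ e`, so `c ≤ 12 / (2^k k)` for `w ≤ 4 / 2^k`, and this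
is small against `1/k²` once `48 k < 2^k`. The zero comes from the intermediate value theorem,
the series converging uniformly on `[0, z]`.
-/

open Real Set

lemma half_pow_le_fallFact {s : ℝ} (hs : -(1 / 2) ≤ s) (m : ℕ) :
    (1 / 2 : ℝ) ^ m ≤ fallFact (m + s) m := by
  calc (1 / 2 : ℝ) ^ m = ∏ _j ∈ Finset.range m, (1 / 2 : ℝ) := by simp
    _ ≤ fallFact (m + s) m := Finset.prod_le_prod (fun _ _ => by norm_num) fun j hj => by
      have : (j : ℝ) + 1 ≤ m := by exact_mod_cast Finset.mem_range.mp hj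
      linarith

noncomputable def besselTerm (q s : ℝ) (N : ℕ) (x : ℝ) (m : ℕ) : ℝ :=
  q ^ m * x ^ (N * m) / ((m.factorial : ℝ) * fallFact (m + s) m)

noncomputable def besselSeries (q s : ℝ) (N : ℕ) (x : ℝ) : ℝ :=
  ∑' m, besselTerm q s N x m

section besselSeries

variable {q s x z : ℝ} {N : ℕ}

lemma besselTerm_nonneg (hq : 0 ≤ q) (hs : -(1 / 2) ≤ s) (hx : 0 ≤ x) (m : ℕ) :
    0 ≤ besselTerm q s N x m := by
  have := (half_pow_le_fallFact hs m).trans' (by positivity : (0 : ℝ) < (1 / 2) ^ m).le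
  unfold besselTerm
  positivity

lemma besselTerm_le (hq : 0 ≤ q) (hs : -(1 / 2) ≤ s) (hx : 0 ≤ x) (hxz : x ≤ z) (m : ℕ) :
    besselTerm q s N x m ≤ (2 * (q * z ^ N)) ^ m := by
  have hz : 0 ≤ z := hx.trans hxz
  have hnum : q ^ m * x ^ (N * m) ≤ (q * z ^ N) ^ m := by
    rw [pow_mul, mul_pow]
    gcongr
  have hden : (1 / 2 : ℝ) ^ m ≤ (m.factorial : ℝ) * fallFact (m + s) m :=
    (half_pow_le_fallFact hs m).trans <| le_mul_of_one_le_left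
      ((half_pow_le_fallFact hs m).trans' (by positivity)) (by exact_mod_cast m.factorial_pos)
  calc besselTerm q s N x m ≤ (q * z ^ N) ^ m / (1 / 2) ^ m := by
        unfold besselTerm
        gcongr
    _ = (2 * (q * z ^ N)) ^ m := by rw [← div_pow]; ring_nf

lemma summable_besselTerm (hq : 0 ≤ q) (hs : -(1 / 2) ≤ s) (hx : 0 ≤ x) (hxz : x ≤ z)
    (hc : 2 * (q * z ^ N) < 1) : Summable (besselTerm q s N x) :=
  (summable_geometric_of_lt_one (have := hx.trans hxz; by positivity) hc).of_nonneg_of_le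
    (besselTerm_nonneg hq hs hx) (besselTerm_le hq hs hx hxz)

lemma continuousOn_besselSeries (hq : 0 ≤ q) (hs : -(1 / 2) ≤ s) (hz : 0 ≤ z)
    (hc : 2 * (q * z ^ N) < 1) :
    ContinuousOn (besselSeries q s N) (Icc 0 z) := by
  rw [continuousOn_iff_continuous_domRestrict]
  refine continuous_tsum (fun m => ?_) (summable_geometric_of_lt_one (by positivity) hc)
    fun m x => ?_
  · unfold besselTerm
    fun_prop
  · rw [Real.norm_of_nonneg (besselTerm_nonneg hq hs x.2.1 m)]
    exact besselTerm_le hq hs x.2.1 x.2.2 m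

lemma besselTerm_zero : besselTerm q s N x 0 = 1 := by
  simp [besselTerm, fallFact]

lemma besselSeries_zero (hN : N ≠ 0) : besselSeries q s N 0 = 1 := by
  rw [besselSeries, tsum_eq_single 0 fun m hm => ?_, besselTerm_zero]
  simp [besselTerm, zero_pow (Nat.mul_ne_zero hN hm)]

lemma one_le_besselSeries (hq : 0 ≤ q) (hs : -(1 / 2) ≤ s) (hx : 0 ≤ x)
    (hc : 2 * (q * x ^ N) < 1) :
    1 ≤ besselSeries q s N x :=
  besselTerm_zero.symm.le.trans <|
    (summable_besselTerm hq hs hx le_rfl hc).le_tsum 0 fun m _ => besselTerm_nonneg hq hs hx m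

lemma besselSeries_le_inv_one_sub (hq : 0 ≤ q) (hs : -(1 / 2) ≤ s) (hx : 0 ≤ x)
    (hc : 2 * (q * x ^ N) < 1) :
    besselSeries q s N x ≤ (1 - 2 * (q * x ^ N))⁻¹ := by
  rw [← tsum_geometric_of_lt_one (by positivity) hc]
  exact (summable_besselTerm hq hs hx le_rfl hc).tsum_le_tsum (besselTerm_le hq hs hx le_rfl)
    (summable_geometric_of_lt_one (by positivity) hc)

end besselSeries

noncomputable def ukwRate (k : ℕ) (w : ℝ) : ℝ := w * k / ((k : ℝ) + 1) ^ 2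

lemma ukw_eq (k : ℕ) (w x : ℝ) :
    ukw k w x = x * exp x * besselSeries (ukwRate k w) (1 / (k + 1)) (k + 1) x
      - exp x * besselSeries (ukwRate k w) (-(1 / (k + 1))) (k + 1) x := by
  simp_rw [ukw, besselSeries, besselTerm, ukwRate, ← sub_eq_add_neg]

section ukw

variable {k : ℕ} {w z : ℝ}

lemma neg_half_le_neg_one_div_succ (hk : 1 ≤ k) : -(1 / 2 : ℝ) ≤ -(1 / (k + 1)) := by
  have : (1 : ℝ) ≤ k := by exact_mod_cast hk
  rw [neg_le_neg_iff, div_le_div_iff₀ (by positivity) two_pos]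
  linarith

lemma neg_half_le_one_div_succ (k : ℕ) : -(1 / 2 : ℝ) ≤ 1 / (k + 1) :=
  (neg_nonpos.mpr (by norm_num)).trans (by positivity)

lemma ukw_zero : ukw k w 0 = -1 := by
  rw [ukw_eq, besselSeries_zero k.succ_ne_zero, besselSeries_zero k.succ_ne_zero]
  simp

lemma ukw_pos (hk : 1 ≤ k) (hw : 0 ≤ w) (hz : 0 < z)
    (hc : 2 * (ukwRate k w * z ^ (k + 1)) < 1)
    (hcz : (1 - 2 * (ukwRate k w * z ^ (k + 1)))⁻¹ < z) : 0 < ukw k w z := by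
  have hq : 0 ≤ ukwRate k w := by unfold ukwRate; positivity
  have h₁ := one_le_besselSeries hq (neg_half_le_one_div_succ k) hz.le hc
  have h₂ := besselSeries_le_inv_one_sub hq (neg_half_le_neg_one_div_succ hk) hz.le hc
  rw [ukw_eq, sub_pos]
  calc exp z * besselSeries (ukwRate k w) (-(1 / (k + 1))) (k + 1) z
      < exp z * z := by gcongr; exact h₂.trans_lt hcz
    _ ≤ z * exp z * besselSeries (ukwRate k w) (1 / (k + 1)) (k + 1) z := by
      rw [mul_comm]; exact le_mul_of_one_le_right (by positivity) h₁

lemma continuousOn_ukw (hk : 1 ≤ k) (hw : 0 ≤ w) (hz : 0 ≤ z)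
    (hc : 2 * (ukwRate k w * z ^ (k + 1)) < 1) :
    ContinuousOn (ukw k w) (Icc 0 z) := by
  have hq : 0 ≤ ukwRate k w := by unfold ukwRate; positivity
  rw [funext (ukw_eq k w)]
  exact ((continuousOn_id.mul continuous_exp.continuousOn).mul
    (continuousOn_besselSeries hq (neg_half_le_one_div_succ k) hz hc)).sub
    (continuous_exp.continuousOn.mul
      (continuousOn_besselSeries hq (neg_half_le_neg_one_div_succ hk) hz hc))

end ukw

lemma inv_one_sub_two_mul_lt {c ε : ℝ} (hc : 0 ≤ c) (hε : ε ≤ 1) (hcε : 4 * c < ε) :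
    2 * c < 1 ∧ (1 - 2 * c)⁻¹ < 1 + ε := by
  refine ⟨by linarith, ?_⟩
  rw [inv_lt_iff_one_lt_mul₀ (by linarith)]
  nlinarith

lemma forty_eight_mul_lt_two_pow {k : ℕ} (hk : 9 ≤ k) : 48 * k < 2 ^ k := by
  induction k, hk using Nat.le_induction with
  | base => norm_num
  | succ k hk ih => rw [pow_succ]; omega

lemma one_add_inv_sq_pow_succ_le_three {k : ℕ} (hk : 2 ≤ k) :
    (1 + 1 / (k : ℝ) ^ 2) ^ (k + 1) ≤ 3 := by
  have hkR : (2 : ℝ) ≤ k := by exact_mod_cast hk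
  calc (1 + 1 / (k : ℝ) ^ 2) ^ (k + 1) ≤ exp (1 / (k : ℝ) ^ 2) ^ (k + 1) := by
        gcongr; linarith [add_one_le_exp (1 / (k : ℝ) ^ 2)]
    _ = exp ((k + 1 : ℕ) * (1 / (k : ℝ) ^ 2)) := (exp_nat_mul _ _).symm
    _ ≤ exp 1 := by
        gcongr
        rw [mul_one_div, div_le_one (by positivity)]
        push_cast
        nlinarith
    _ ≤ 3 := (exp_one_lt_d9.trans (by norm_num)).le

lemma four_mul_ukwRate_mul_pow_lt {k : ℕ} {w : ℝ} (hk : 9 ≤ k) (hw : w ≤ 1 / 2 ^ (k - 2)) :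
    4 * (ukwRate k w * (1 + 1 / (k : ℝ) ^ 2) ^ (k + 1)) < 1 / (k : ℝ) ^ 2 := by
  have hkR : (9 : ℝ) ≤ k := by exact_mod_cast hk
  have h2k : (48 * k : ℝ) < 2 ^ k := by exact_mod_cast forty_eight_mul_lt_two_pow hk
  have hw4 : w ≤ 4 / 2 ^ k := by
    have h : (2 : ℝ) ^ k = 2 ^ (k - 2) * 4 := by
      rw [← show (2 : ℝ) ^ 2 = 4 by norm_num, ← pow_add, Nat.sub_add_cancel (by omega)]
    rw [h]
    calc w ≤ 1 / 2 ^ (k - 2) := hw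
      _ = 4 / (2 ^ (k - 2) * 4) := by field_simp
  have hrate : ukwRate k w ≤ 4 / (2 ^ k * k) := by
    calc ukwRate k w ≤ 4 / 2 ^ k * k / (k : ℝ) ^ 2 := by
          unfold ukwRate; gcongr; linarith
      _ = 4 / (2 ^ k * k) := by field_simp
  calc 4 * (ukwRate k w * (1 + 1 / (k : ℝ) ^ 2) ^ (k + 1)) ≤ 4 * (4 / (2 ^ k * k) * 3) := by
        gcongr; exact one_add_inv_sq_pow_succ_le_three (by omega)
    _ < 1 / (k : ℝ) ^ 2 := by
        rw [show (4 : ℝ) * (4 / (2 ^ k * k) * 3) = 48 / (2 ^ k * k) by ring,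
          div_lt_div_iff₀ (by positivity) (by positivity)]
        nlinarith

/-- There is `K` such that for all `k ≥ K` and all `0 < w ≤ 1/2^(k-2)` we have
`u_{k,w}(1 + 1/k²) > 0` while `u_{k,w}(0) = -1 < 0`; in particular `u_{k,w}` has a zero in
`(0, 1 + 1/k²)`. -/
theorem stmt11 : ∃ K : ℕ, ∀ k : ℕ, K ≤ k → ∀ w : ℝ, 0 < w → w ≤ 1 / 2 ^ (k - 2) →
    0 < ukw k w (1 + 1 / (k : ℝ) ^ 2) ∧ ukw k w 0 = -1 ∧
      ∃ x ∈ Set.Ioo (0 : ℝ) (1 + 1 / (k : ℝ) ^ 2), ukw k w x = 0 := by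
  refine ⟨9, fun k hk w hw₀ hw => ?_⟩
  have hk1 : 1 ≤ k := by omega
  have hε : 1 / (k : ℝ) ^ 2 ≤ 1 :=
    div_le_one_of_le₀ (by norm_cast; nlinarith) (by positivity)
  obtain ⟨hc, hcz⟩ := inv_one_sub_two_mul_lt (by unfold ukwRate; positivity) hε
    (four_mul_ukwRate_mul_pow_lt hk hw)
  have hz : (0 : ℝ) < 1 + 1 / (k : ℝ) ^ 2 := by positivity
  have hpos := ukw_pos hk1 hw₀.le hz hc hcz
  obtain ⟨x, hx, hx0⟩ := intermediate_value_Ioo hz.le (continuousOn_ukw hk1 hw₀.le hz.le hc)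
    (show (0 : ℝ) ∈ Ioo (ukw k w 0) _ by rw [ukw_zero]; exact ⟨by norm_num, hpos⟩)
  exact ⟨hpos, ukw_zero, x, hx, hx0⟩
end
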